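/- The basis exchange walk on the uniform matroid of rank k on an n-element ground set (with 0 < k < n) has Ollivier–Ricci curvature κ ≥ 1 - (k-1)(n-k)/(k(n-k+1)); in particular κ > 0. -/

import Mathlib

open scoped Classical BigOperators

/-- A matroid given by its set of bases: a nonempty antichain of finite
subsets satisfying the basis exchange property. -/
structure FinMatroid (α : Type*) [DecidableEq α] where
  IsBase : Finset α → Prop
  nonempty : ∃ B, IsBase B
  antichain : ∀ B₁ B₂, IsBase B₁ → IsBase B₂ → B₁ ⊆ B₂ → B₁ = B₂
  exchange : ∀ B₁ B₂, IsBase B₁ → IsBase B₂ → ∀ b₁ ∈ B₁ \ B₂,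
      ∃ b₂ ∈ B₂ \ B₁, IsBase (insert b₂ (B₁.erase b₁))

namespace FinMatroid

variable {α : Type*} [Fintype α] [DecidableEq α] (M : FinMatroid α)

/-- `N(B - u)`: the elements `x` such that `B - u + x` is a basis. -/
noncomputable def exNbr (B : Finset α) (u : α) : Finset α :=
  Finset.univ.filter (fun x => M.IsBase (insert x (B.erase u)))

/-- The bases containing `B - u`, i.e. the possible results of an up-step after
dropping `u` from `B`. -/
noncomputable def up (B : Finset α) (u : α) : Finset (Finset α) :=
  Finset.univ.filter (fun B' => M.IsBase B' ∧ B.erase u ⊆ B')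

/-- The transition probability of the basis exchange (down-up) walk:
drop a uniform element `u` of the current basis `S`, then move to a uniform
basis containing `S - u`. -/
noncomputable def step (S B' : Finset α) : ℝ :=
  ∑ u ∈ S, (1 / (S.card : ℝ)) * (if B' ∈ M.up S u then 1 / ((M.up S u).card : ℝ) else 0)

/-- The metric induced by the basis exchange walk on bases: the graph distance
in the basis exchange graph, which equals `#(S \ T)`. -/
noncomputable def dist (S T : Finset α) : ℝ := ((S \ T).card : ℝ)

/-- `π` is a coupling of the distributions `μ` and `ν` on `Finset α`. -/
def IsCoupling (μ ν : Finset α → ℝ) (π : Finset α → Finset α → ℝ) : Prop :=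
  (∀ x y, 0 ≤ π x y) ∧ (∀ x, ∑ y : Finset α, π x y = μ x) ∧
    (∀ y, ∑ x : Finset α, π x y = ν y)

/-- The expected distance under a coupling `π`. -/
noncomputable def cost (π : Finset α → Finset α → ℝ) : ℝ :=
  ∑ x : Finset α, ∑ y : Finset α, π x y * dist x y

/-- Wasserstein distance between two distributions on bases. -/
noncomputable def W (μ ν : Finset α → ℝ) : ℝ :=
  sInf {c | ∃ π, IsCoupling μ ν π ∧ cost π = c}

/-- The Ollivier–Ricci curvature of the basis exchange walk: the largest `κ`
such that `W(P(S,·), P(T,·)) ≤ (1 - κ) · d(S,T)` for all bases `S`, `T`. -/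
noncomputable def curvature : ℝ :=
  sSup {κ : ℝ | ∀ S T, M.IsBase S → M.IsBase T →
    W (M.step S) (M.step T) ≤ (1 - κ) * dist S T}

end FinMatroid

namespace FinMatroid

variable {α : Type*} [Fintype α] [DecidableEq α]

lemma cost_nonneg' {π : Finset α → Finset α → ℝ} (h : ∀ x y, 0 ≤ π x y) : 0 ≤ cost π :=
  Finset.sum_nonneg fun x _ => Finset.sum_nonneg fun y _ =>
    mul_nonneg (h x y) (Nat.cast_nonneg _)

lemma W_le' {μ ν : Finset α → ℝ} {π} (hπ : IsCoupling μ ν π) : W μ ν ≤ cost π := by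
  apply csInf_le
  · exact ⟨0, by rintro c ⟨π', hπ', rfl⟩; exact cost_nonneg' hπ'.1⟩
  · exact ⟨π, hπ, rfl⟩

lemma W_nonneg' (μ ν : Finset α → ℝ) : 0 ≤ W μ ν :=
  Real.sInf_nonneg (by rintro c ⟨π, hπ, rfl⟩; exact cost_nonneg' hπ.1)

lemma W_le_pairing (μ ν : Finset α → ℝ) (w : α × α → ℝ) (hw : ∀ p, 0 ≤ w p)
    (F G : α × α → Finset α)
    (hF : ∀ X, ∑ p : α × α, w p * (if F p = X then 1 else 0) = μ X)
    (hG : ∀ Y, ∑ p : α × α, w p * (if G p = Y then 1 else 0) = ν Y) :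
    W μ ν ≤ ∑ p : α × α, w p * dist (F p) (G p) := by
  set π : Finset α → Finset α → ℝ := fun X Y =>
    ∑ p : α × α, w p * ((if F p = X then 1 else 0) * (if G p = Y then 1 else 0)) with hπdef
  have hone : ∀ (Z : Finset α), ∑ y : Finset α, (if Z = y then (1:ℝ) else 0) = 1 := by
    intro Z; rw [Finset.sum_ite_eq]; simp
  have hc : IsCoupling μ ν π := by
    refine ⟨fun X Y => Finset.sum_nonneg fun p _ => mul_nonneg (hw p) (by positivity), ?_, ?_⟩
    · intro X
      rw [← hF X, Finset.sum_comm]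
      refine Finset.sum_congr rfl fun p _ => ?_
      rw [← Finset.mul_sum, ← Finset.mul_sum, hone (G p), mul_one]
    · intro Y
      rw [← hG Y, Finset.sum_comm]
      refine Finset.sum_congr rfl fun p _ => ?_
      have : ∑ x : Finset α, ((if F p = x then (1:ℝ) else 0) * (if G p = Y then 1 else 0))
          = (if G p = Y then (1:ℝ) else 0) := by
        rw [← Finset.sum_mul, hone (F p), one_mul]
      rw [← Finset.mul_sum, this]
  have hcost : cost π = ∑ p : α × α, w p * dist (F p) (G p) := by
    unfold cost
    have h1 : ∀ X Y : Finset α, π X Y * dist X Y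
        = ∑ p : α × α, (if F p = X then (1:ℝ) else 0) *
            ((if G p = Y then (1:ℝ) else 0) * (w p * dist X Y)) := by
      intro X Y
      rw [hπdef, Finset.sum_mul]
      exact Finset.sum_congr rfl fun p _ => by ring
    simp only [h1]
    rw [show (∑ X : Finset α, ∑ Y : Finset α, ∑ p : α × α, (if F p = X then (1:ℝ) else 0) *
            ((if G p = Y then (1:ℝ) else 0) * (w p * dist X Y)))
        = ∑ p : α × α, ∑ X : Finset α, ∑ Y : Finset α, (if F p = X then (1:ℝ) else 0) *
            ((if G p = Y then (1:ℝ) else 0) * (w p * dist X Y)) from by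
      exact (Finset.sum_congr rfl fun X _ => Finset.sum_comm).trans Finset.sum_comm]
    refine Finset.sum_congr rfl fun p _ => ?_
    rw [Finset.sum_eq_single (F p)]
    · rw [Finset.sum_eq_single (G p)]
      · simp
      · intro y _ hy; rw [if_neg (Ne.symm hy)]; ring
      · intro h; exact absurd (Finset.mem_univ _) h
    · intro X _ hX
      refine Finset.sum_eq_zero fun Y _ => ?_
      rw [if_neg (Ne.symm hX)]; ring
    · intro h; exact absurd (Finset.mem_univ _) h
  exact hcost ▸ W_le' hc

end FinMatroid

namespace FinMatroid

variable {α : Type*} [Fintype α] [DecidableEq α]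

lemma mem_up_iff (M : FinMatroid α) {k : ℕ} (huni : ∀ B, M.IsBase B ↔ B.card = k)
    (R : Finset α) (u : α) (X : Finset α) :
    X ∈ M.up R u ↔ X.card = k ∧ R.erase u ⊆ X := by
  simp [up, huni]

lemma insert_mem_up (M : FinMatroid α) {k : ℕ} (hk : 0 < k)
    (huni : ∀ B, M.IsBase B ↔ B.card = k) {R : Finset α} (hR : R.card = k) {u : α} (hu : u ∈ R)
    {x : α} (hx : x ∉ R.erase u) : insert x (R.erase u) ∈ M.up R u := by
  rw [mem_up_iff M huni]
  refine ⟨?_, Finset.subset_insert _ _⟩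
  rw [Finset.card_insert_of_notMem hx, Finset.card_erase_of_mem hu, hR]
  omega

lemma exists_insert_eq (M : FinMatroid α) {k : ℕ} (hk : 0 < k)
    (huni : ∀ B, M.IsBase B ↔ B.card = k) {R : Finset α} (hR : R.card = k) {u : α} (hu : u ∈ R)
    {X : Finset α} (hX : X ∈ M.up R u) :
    ∃ x, x ∉ R.erase u ∧ insert x (R.erase u) = X := by
  rw [mem_up_iff M huni] at hX
  obtain ⟨hXc, hsub⟩ := hX
  have hlt : (R.erase u).card < X.card := by
    rw [Finset.card_erase_of_mem hu, hR, hXc]; omega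
  obtain ⟨x, hxX, hxe⟩ := Finset.exists_of_ssubset (Finset.ssubset_iff_subset_ne.2
    ⟨hsub, fun h => absurd (h ▸ hlt) (lt_irrefl _)⟩)
  refine ⟨x, hxe, ?_⟩
  apply Finset.eq_of_subset_of_card_le (Finset.insert_subset hxX hsub)
  rw [Finset.card_insert_of_notMem hxe, Finset.card_erase_of_mem hu, hR, hXc]
  omega

lemma sum_insert_eq (M : FinMatroid α) {k : ℕ} (hk : 0 < k)
    (huni : ∀ B, M.IsBase B ↔ B.card = k) {R : Finset α} (hR : R.card = k) {u : α} (hu : u ∈ R)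
    (X : Finset α) (c : ℝ) :
    (∑ x ∈ (R.erase u)ᶜ, if insert x (R.erase u) = X then c else 0)
      = if X ∈ M.up R u then c else 0 := by
  by_cases hX : X ∈ M.up R u
  · rw [if_pos hX]
    obtain ⟨x₀, hx₀, heq⟩ := exists_insert_eq M hk huni hR hu hX
    rw [Finset.sum_eq_single_of_mem x₀ (Finset.mem_compl.2 hx₀), if_pos heq]
    intro x hx hne
    rw [if_neg]
    intro h
    apply hne
    have : x ∈ insert x₀ (R.erase u) := by rw [heq, ← h]; exact Finset.mem_insert_self _ _
    rcases Finset.mem_insert.1 this with h' | h'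
    · exact h'
    · exact absurd h' (Finset.mem_compl.1 hx)
  · rw [if_neg hX]
    refine Finset.sum_eq_zero fun x hx => ?_
    rw [if_neg]
    intro h
    exact hX (h ▸ insert_mem_up M hk huni hR hu (Finset.mem_compl.1 hx))

lemma card_up (M : FinMatroid α) {k n : ℕ} (hk : 0 < k) (hn : Fintype.card α = n)
    (huni : ∀ B, M.IsBase B ↔ B.card = k) {R : Finset α} (hR : R.card = k) {u : α} (hu : u ∈ R) :
    (M.up R u).card = n - k + 1 := by
  have hkn : k ≤ n := by rw [← hn, ← hR]; exact Finset.card_le_univ R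
  have himg : M.up R u = (R.erase u)ᶜ.image (fun x => insert x (R.erase u)) := by
    ext X
    constructor
    · intro hX
      obtain ⟨x₀, hx₀, heq⟩ := exists_insert_eq M hk huni hR hu hX
      exact Finset.mem_image.2 ⟨x₀, Finset.mem_compl.2 hx₀, heq⟩
    · rintro hX
      obtain ⟨x, hx, rfl⟩ := Finset.mem_image.1 hX
      exact insert_mem_up M hk huni hR hu (Finset.mem_compl.1 hx)
  rw [himg, Finset.card_image_of_injOn, Finset.card_compl, Finset.card_erase_of_mem hu, hR, hn]
  · omega
  · intro x hx y hy hxy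
    have hxy' : insert x (R.erase u) = insert y (R.erase u) := hxy
    have : x ∈ insert y (R.erase u) := by rw [← hxy']; exact Finset.mem_insert_self _ _
    rcases Finset.mem_insert.1 this with h' | h'
    · exact h'
    · exact absurd h' (Finset.mem_compl.1 hx)

lemma exists_invol {α : Type*} [DecidableEq α] :
    ∀ (A B : Finset α), Disjoint A B → A.card = B.card →
      ∃ f : α → α, (∀ x, f (f x) = x) ∧ (∀ x ∈ A, f x ∈ B) ∧ (∀ x ∈ B, f x ∈ A) ∧
        (∀ x, x ∉ A → x ∉ B → f x = x) := by
  intro A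
  induction A using Finset.strongInductionOn with
  | _ A ih =>
    intro B hd hc
    rcases A.eq_empty_or_nonempty with rfl | ⟨a, ha⟩
    · have hB : B = ∅ := Finset.card_eq_zero.1 (by simp at hc; omega)
      subst hB
      exact ⟨id, fun x => rfl, by simp, by simp, fun x _ _ => rfl⟩
    · have hB : B.Nonempty := Finset.card_pos.1 (hc ▸ Finset.card_pos.2 ⟨a, ha⟩)
      obtain ⟨b, hb⟩ := hB
      have hab : a ≠ b := fun h => Finset.disjoint_left.1 hd ha (h ▸ hb)
      have haB : a ∉ B := Finset.disjoint_left.1 hd ha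
      have hbA : b ∉ A := fun h => Finset.disjoint_left.1 hd h hb
      obtain ⟨f, hff, hAB, hBA, hfix⟩ := ih (A.erase a) (Finset.erase_ssubset ha)
        (B.erase b) (Finset.disjoint_of_subset_left (Finset.erase_subset _ _)
          (Finset.disjoint_of_subset_right (Finset.erase_subset _ _) hd))
        (by rw [Finset.card_erase_of_mem ha, Finset.card_erase_of_mem hb, hc])
      refine ⟨fun x => if x = a then b else if x = b then a else f x, ?_, ?_, ?_, ?_⟩
      · intro x
        by_cases hxa : x = a
        · simp [hxa, hab.symm, if_neg hab]
        · by_cases hxb : x = b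
          · simp [hxb, hab, if_neg hab.symm]
          · have hfxa : f x ≠ a ∧ f x ≠ b := by
              by_cases hxA : x ∈ A.erase a
              · have := hAB x hxA
                exact ⟨fun h => haB ((h ▸ Finset.erase_subset _ _ this)),
                  fun h => (Finset.mem_erase.1 this).1 h⟩
              · by_cases hxB : x ∈ B.erase b
                · have := hBA x hxB
                  exact ⟨fun h => (Finset.mem_erase.1 this).1 h,
                    fun h => hbA ((h ▸ Finset.erase_subset _ _ this))⟩
                · rw [hfix x hxA hxB]; exact ⟨hxa, hxb⟩
            simp only [if_neg hxa, if_neg hxb, if_neg hfxa.1, if_neg hfxa.2]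
            exact hff x
      · intro x hx
        by_cases hxa : x = a
        · simp [hxa, hb]
        · have hxb : x ≠ b := fun h => hbA (h ▸ hx)
          simp only [if_neg hxa, if_neg hxb]
          exact Finset.erase_subset _ _ (hAB x (Finset.mem_erase.2 ⟨hxa, hx⟩))
      · intro x hx
        by_cases hxb : x = b
        · have hxa : x ≠ a := fun h => haB (h ▸ hx)
          simp [hxb, ha, hab.symm, if_neg hab.symm]
        · have hxa : x ≠ a := fun h => haB (h ▸ hx)
          simp only [if_neg hxa, if_neg hxb]
          exact Finset.erase_subset _ _ (hBA x (Finset.mem_erase.2 ⟨hxb, hx⟩))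
      · intro x hxA hxB
        have hxa : x ≠ a := fun h => hxA (h ▸ ha)
        have hxb : x ≠ b := fun h => hxB (h ▸ hb)
        simp only [if_neg hxa, if_neg hxb]
        exact hfix x (fun h => hxA (Finset.erase_subset _ _ h))
          (fun h => hxB (Finset.erase_subset _ _ h))

end FinMatroid

namespace FinMatroid

variable {α : Type*} [Fintype α] [DecidableEq α]

lemma key (M : FinMatroid α) (k n : ℕ) (hk : 0 < k) (hkn : k < n) (hn : Fintype.card α = n)
    (huni : ∀ B, M.IsBase B ↔ B.card = k) (S T : Finset α) (hS : S.card = k) (hT : T.card = k) :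
    W (M.step S) (M.step T)
      ≤ ((k:ℝ) - 1) * ((n:ℝ) - k) / ((k:ℝ) * ((n:ℝ) - k + 1)) * dist S T := by
  have step_eq : ∀ (R : Finset α) (X : Finset α), M.step R X
      = ∑ u ∈ R, (1/(R.card:ℝ)) * (if X ∈ M.up R u then 1/((M.up R u).card:ℝ) else 0) :=
    fun R X => rfl
  set m : ℕ := (S \ T).card with hm
  have hST : (S \ T).card = (T \ S).card := Finset.card_sdiff_comm (hS.trans hT.symm)
  obtain ⟨f, hff, hfST, hfTS, hfix⟩ := exists_invol (S \ T) (T \ S)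
    disjoint_sdiff_sdiff hST
  have hfinj : Function.Injective f := Function.Involutive.injective hff
  have hfu_eq : ∀ u ∈ S, u ∈ T → f u = u := fun u hu huT =>
    hfix u (fun h' => (Finset.mem_sdiff.1 h').2 huT) (fun h' => (Finset.mem_sdiff.1 h').2 hu)
  have hfS : ∀ u ∈ S, f u ∈ T := by
    intro u hu
    by_cases huT : u ∈ T
    · rw [hfu_eq u hu huT]; exact huT
    · exact (Finset.mem_sdiff.1 (hfST u (Finset.mem_sdiff.2 ⟨hu, huT⟩))).1
  have hfT : ∀ v ∈ T, f v ∈ S := by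
    intro v hv
    by_cases hvS : v ∈ S
    · rw [hfix v (fun h' => (Finset.mem_sdiff.1 h').2 hv)
        (fun h' => (Finset.mem_sdiff.1 h').2 hvS)]
      exact hvS
    · exact (Finset.mem_sdiff.1 (hfTS v (Finset.mem_sdiff.2 ⟨hv, hvS⟩))).1
  set h : α → α → α := fun u x => if x = u ∨ x = f u then x else f x with hh
  have hhinv : ∀ u x, h u (h u x) = x := by
    intro u x
    by_cases hc : x = u ∨ x = f u
    · simp only [hh, if_pos hc]
    · have h1 : h u x = f x := by simp only [hh, if_neg hc]
      rw [h1]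
      have h2 : ¬ (f x = u ∨ f x = f u) := by
        rintro (h' | h')
        · exact hc (Or.inr (by rw [← h', hff]))
        · exact hc (Or.inl (hfinj h'))
      simp only [hh, if_neg h2]
      exact hff x
  have hmapsto : ∀ u ∈ S, ∀ x, x ∉ S.erase u → h u x ∉ T.erase (f u) := by
    intro u hu x hx
    by_cases hc : x = u ∨ x = f u
    · have hx' : h u x = x := by simp only [hh, if_pos hc]
      rw [hx']
      rcases hc with rfl | rfl
      · intro hmem
        have huT : x ∈ T := Finset.mem_of_mem_erase hmem
        rw [hfu_eq x hu huT] at hmem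
        exact (Finset.mem_erase.1 hmem).1 rfl
      · exact fun hmem => (Finset.mem_erase.1 hmem).1 rfl
    · have hx' : h u x = f x := by simp only [hh, if_neg hc]
      rw [hx']
      push_neg at hc
      have hxS : x ∉ S := fun h' => hx (Finset.mem_erase.2 ⟨hc.1, h'⟩)
      by_cases hxT : x ∈ T
      · have hmem : f x ∈ S \ T := hfTS x (Finset.mem_sdiff.2 ⟨hxT, hxS⟩)
        exact fun hmem' => (Finset.mem_sdiff.1 hmem).2 (Finset.mem_of_mem_erase hmem')
      · rw [hfix x (fun h' => hxS (Finset.mem_sdiff.1 h').1)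
          (fun h' => hxT (Finset.mem_sdiff.1 h').1)]
        exact fun hmem => hxT (Finset.mem_of_mem_erase hmem)
  have hmapsfrom : ∀ u ∈ S, ∀ y, y ∉ T.erase (f u) → h u y ∉ S.erase u := by
    intro u hu y hy
    by_cases hc : y = u ∨ y = f u
    · have hy' : h u y = y := by simp only [hh, if_pos hc]
      rw [hy']
      rcases hc with rfl | rfl
      · exact fun hmem => (Finset.mem_erase.1 hmem).1 rfl
      · intro hmem
        have hfuS : f u ∈ S := Finset.mem_of_mem_erase hmem
        by_cases huT : u ∈ T
        · rw [hfu_eq u hu huT] at hmem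
          exact (Finset.mem_erase.1 hmem).1 rfl
        · exact (Finset.mem_sdiff.1 (hfST u (Finset.mem_sdiff.2 ⟨hu, huT⟩))).2 hfuS
    · have hy' : h u y = f y := by simp only [hh, if_neg hc]
      rw [hy']
      push_neg at hc
      have hyT : y ∉ T := fun h' => hy (Finset.mem_erase.2 ⟨hc.2, h'⟩)
      by_cases hyS : y ∈ S
      · have hmem : f y ∈ T \ S := hfST y (Finset.mem_sdiff.2 ⟨hyS, hyT⟩)
        exact fun hmem' => (Finset.mem_sdiff.1 hmem).2 (Finset.mem_of_mem_erase hmem')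
      · rw [hfix y (fun h' => hyS (Finset.mem_sdiff.1 h').1)
          (fun h' => hyT (Finset.mem_sdiff.1 h').1)]
        exact fun hmem => hyS (Finset.mem_of_mem_erase hmem)
  -- weights
  set c : ℝ := 1 / ((k:ℝ) * ((n - k + 1 : ℕ) : ℝ)) with hcdef
  have hNcast : ((n - k + 1 : ℕ) : ℝ) = (n:ℝ) - k + 1 := by
    push_cast [hkn.le]; ring
  have hcnn : 0 ≤ c := by
    rw [hcdef]; positivity
  set w : α × α → ℝ := fun p => if p.1 ∈ S ∧ p.2 ∉ S.erase p.1 then c else 0 with hw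
  have hwnn : ∀ p, 0 ≤ w p := by
    intro p; rw [hw]; dsimp only; split_ifs
    · exact hcnn
    · exact le_refl 0
  have hsum_w : ∀ φ : α → α → ℝ,
      (∑ p : α × α, w p * φ p.1 p.2) = ∑ u ∈ S, ∑ x ∈ (S.erase u)ᶜ, c * φ u x := by
    intro φ
    rw [Fintype.sum_prod_type]
    calc (∑ u : α, ∑ x : α, w (u, x) * φ u x)
        = ∑ u ∈ S, ∑ x : α, w (u, x) * φ u x := by
          refine (Finset.sum_subset (Finset.subset_univ S) fun u _ hu => ?_).symm
          refine Finset.sum_eq_zero fun x _ => ?_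
          rw [hw]; simp [hu]
      _ = ∑ u ∈ S, ∑ x ∈ (S.erase u)ᶜ, c * φ u x := by
          refine Finset.sum_congr rfl fun u hu => ?_
          have e1 : (∑ x : α, w (u, x) * φ u x) = ∑ x ∈ (S.erase u)ᶜ, w (u, x) * φ u x := by
            refine (Finset.sum_subset (Finset.subset_univ _) fun x _ hx => ?_).symm
            rw [hw]; simp only [Finset.mem_compl, not_not] at hx; simp [hx]
          rw [e1]
          refine Finset.sum_congr rfl fun x hx => ?_
          rw [hw]; simp [hu, Finset.mem_compl.1 hx]
  -- sum of ite over up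
  have hiteup : ∀ (R : Finset α), R.card = k → ∀ u ∈ R, ∀ X : Finset α,
      (∑ x ∈ (R.erase u)ᶜ, c * (if insert x (R.erase u) = X then (1:ℝ) else 0))
        = (1/(R.card:ℝ)) * (if X ∈ M.up R u then 1/((M.up R u).card:ℝ) else 0) := by
    intro R hR u hu X
    have h1 : (∑ x ∈ (R.erase u)ᶜ, c * (if insert x (R.erase u) = X then (1:ℝ) else 0))
        = ∑ x ∈ (R.erase u)ᶜ, (if insert x (R.erase u) = X then c else 0) := by
      refine Finset.sum_congr rfl fun x _ => ?_
      split_ifs <;> ring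
    rw [h1, sum_insert_eq M hk huni hR hu X c, hR, card_up M hk hn huni hR hu, hcdef]
    split_ifs
    · rw [one_div_mul_one_div]
    · ring
  -- the two marginals
  have hF : ∀ X, (∑ p : α × α, w p * (if insert p.2 (S.erase p.1) = X then (1:ℝ) else 0))
      = M.step S X := by
    intro X
    rw [hsum_w (fun u x => if insert x (S.erase u) = X then (1:ℝ) else 0), step_eq]
    exact Finset.sum_congr rfl fun u hu => hiteup S hS u hu X
  have hG : ∀ Y, (∑ p : α × α,
        w p * (if insert (h p.1 p.2) (T.erase (f p.1)) = Y then (1:ℝ) else 0))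
      = M.step T Y := by
    intro Y
    rw [hsum_w (fun u x => if insert (h u x) (T.erase (f u)) = Y then (1:ℝ) else 0), step_eq]
    have h1 : ∀ u ∈ S,
        (∑ x ∈ (S.erase u)ᶜ, c * (if insert (h u x) (T.erase (f u)) = Y then (1:ℝ) else 0))
        = ∑ y ∈ (T.erase (f u))ᶜ, c * (if insert y (T.erase (f u)) = Y then (1:ℝ) else 0) := by
      intro u hu
      refine Finset.sum_nbij' (i := fun x => h u x) (j := fun y => h u y) ?_ ?_ ?_ ?_ ?_
      · intro x hx
        exact Finset.mem_compl.2 (hmapsto u hu x (Finset.mem_compl.1 hx))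
      · intro y hy
        exact Finset.mem_compl.2 (hmapsfrom u hu y (Finset.mem_compl.1 hy))
      · intro x _; exact hhinv u x
      · intro y _; exact hhinv u y
      · intro x _; rfl
    calc (∑ u ∈ S, ∑ x ∈ (S.erase u)ᶜ,
            c * (if insert (h u x) (T.erase (f u)) = Y then (1:ℝ) else 0))
        = ∑ u ∈ S, (1/(T.card:ℝ)) * (if Y ∈ M.up T (f u) then 1/((M.up T (f u)).card:ℝ) else 0) := by
          refine Finset.sum_congr rfl fun u hu => ?_
          rw [h1 u hu]
          exact hiteup T hT (f u) (hfS u hu) Y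
      _ = ∑ v ∈ T, (1/(T.card:ℝ)) * (if Y ∈ M.up T v then 1/((M.up T v).card:ℝ) else 0) := by
          refine Finset.sum_nbij' (i := f) (j := f) ?_ ?_ ?_ ?_ ?_
          · intro u hu; exact hfS u hu
          · intro v hv; exact hfT v hv
          · intro u _; exact hff u
          · intro v _; exact hff v
          · intro u _; rfl
  -- subset claims about the coupled moves
  have M1 : ∀ u ∈ S, ∀ x, x ∉ S.erase u →
      insert x (S.erase u) \ insert (h u x) (T.erase (f u)) ⊆ S \ T := by
    intro u hu x hx z hz
    rw [Finset.mem_sdiff] at hz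
    obtain ⟨hzF, hzG⟩ := hz
    have hzS : z ∈ S := by
      rcases Finset.mem_insert.1 hzF with rfl | hz2
      · by_cases hxS : z ∈ S
        · exact hxS
        · exfalso; apply hzG
          have hzu : z ≠ u := fun h' => hxS (h' ▸ hu)
          by_cases hzfu : z = f u
          · refine Finset.mem_insert.2 (Or.inl ?_)
            simp only [hh]
            rw [if_pos (Or.inr hzfu)]
          · by_cases hzT : z ∈ T
            · exact Finset.mem_insert.2 (Or.inr (Finset.mem_erase.2 ⟨hzfu, hzT⟩))
            · refine Finset.mem_insert.2 (Or.inl ?_)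
              simp only [hh]
              rw [if_neg (show ¬(z = u ∨ z = f u) from fun hc => hc.elim hzu hzfu)]
              exact (hfix z (fun h' => hxS (Finset.mem_sdiff.1 h').1)
                (fun h' => hzT (Finset.mem_sdiff.1 h').1)).symm
      · exact (Finset.mem_erase.1 hz2).2
    refine Finset.mem_sdiff.2 ⟨hzS, fun hzT => ?_⟩
    have hzfu : z = f u := by
      by_contra hne
      exact hzG (Finset.mem_insert.2 (Or.inr (Finset.mem_erase.2 ⟨hne, hzT⟩)))
    by_cases huT : u ∈ T
    · rw [hfu_eq u hu huT] at hzfu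
      subst hzfu
      have hxu : x = z := by
        rcases Finset.mem_insert.1 hzF with h' | h'
        · exact h'.symm
        · exact absurd h' (Finset.notMem_erase _ _)
      apply hzG
      refine Finset.mem_insert.2 (Or.inl ?_)
      simp only [hh]
      rw [if_pos (Or.inl hxu)]
      exact hxu.symm
    · exact (Finset.mem_sdiff.1 (hfST u (Finset.mem_sdiff.2 ⟨hu, huT⟩))).2 (hzfu ▸ hzS)
  have M2 : ∀ u ∈ S, u ∉ T → ∀ x, x ∉ S.erase u →
      u ∉ insert x (S.erase u) \ insert (h u x) (T.erase (f u)) := by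
    intro u hu huT x hx hmem
    rw [Finset.mem_sdiff] at hmem
    have hxu : x = u := by
      rcases Finset.mem_insert.1 hmem.1 with h' | h'
      · exact h'.symm
      · exact absurd h' (Finset.notMem_erase _ _)
    apply hmem.2
    refine Finset.mem_insert.2 (Or.inl ?_)
    simp only [hh]
    rw [if_pos (Or.inl hxu)]
    exact hxu.symm
  have M3 : ∀ u ∈ S, ∀ x ∈ T \ S, x ≠ f u →
      f x ∉ insert x (S.erase u) \ insert (h u x) (T.erase (f u)) := by
    intro u hu x hxTS hxfu hmem
    apply (Finset.mem_sdiff.1 hmem).2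
    have hxu : x ≠ u := fun h' => (Finset.mem_sdiff.1 hxTS).2 (h' ▸ hu)
    refine Finset.mem_insert.2 (Or.inl ?_)
    simp only [hh]
    rw [if_neg (show ¬(x = u ∨ x = f u) from fun hc => hc.elim hxu hxfu)]
  -- distance bounds
  have distle : ∀ (P Q R : Finset α), P \ Q ⊆ R → dist P Q ≤ (R.card : ℝ) :=
    fun P Q R hsub => Nat.cast_le.2 (Finset.card_le_card hsub)
  have hD1 : ∀ u ∈ S, ∀ x, x ∉ S.erase u →
      dist (insert x (S.erase u)) (insert (h u x) (T.erase (f u))) ≤ (m:ℝ) := by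
    intro u hu x hx
    exact distle _ _ _ (M1 u hu x hx)
  have hD2 : ∀ u ∈ S, u ∉ T → ∀ x, x ∉ S.erase u →
      dist (insert x (S.erase u)) (insert (h u x) (T.erase (f u))) ≤ (m:ℝ) - 1 := by
    intro u hu huT x hx
    have husd : u ∈ S \ T := Finset.mem_sdiff.2 ⟨hu, huT⟩
    have hm1 : 1 ≤ m := Finset.card_pos.2 ⟨u, husd⟩
    have hsub : insert x (S.erase u) \ insert (h u x) (T.erase (f u)) ⊆ (S \ T).erase u :=
      (Finset.subset_erase).2 ⟨M1 u hu x hx, M2 u hu huT x hx⟩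
    have hb := distle _ _ _ hsub
    rw [Finset.card_erase_of_mem husd, Nat.cast_sub hm1, Nat.cast_one] at hb
    exact hb
  have hD3 : ∀ u ∈ S, u ∈ T → ∀ x ∈ T \ S,
      dist (insert x (S.erase u)) (insert (h u x) (T.erase (f u))) ≤ (m:ℝ) - 1 := by
    intro u hu huT x hxTS
    have hxS : x ∉ S := (Finset.mem_sdiff.1 hxTS).2
    have hx : x ∉ S.erase u := fun h' => hxS (Finset.mem_of_mem_erase h')
    have hxfu : x ≠ f u := fun h' => hxS (by rw [h', hfu_eq u hu huT]; exact hu)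
    have hfxsd : f x ∈ S \ T := hfTS x hxTS
    have hm1 : 1 ≤ m := Finset.card_pos.2 ⟨f x, hfxsd⟩
    have hsub : insert x (S.erase u) \ insert (h u x) (T.erase (f u)) ⊆ (S \ T).erase (f x) :=
      (Finset.subset_erase).2 ⟨M1 u hu x hx, M3 u hu x hxTS hxfu⟩
    have hb := distle _ _ _ hsub
    rw [Finset.card_erase_of_mem hfxsd, Nat.cast_sub hm1, Nat.cast_one] at hb
    exact hb
  have hD4 : ∀ u ∈ S, u ∉ T → ∀ x ∈ (T \ S).erase (f u),
      dist (insert x (S.erase u)) (insert (h u x) (T.erase (f u))) ≤ (m:ℝ) - 2 := by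
    intro u hu huT x hx
    have hxTS : x ∈ T \ S := Finset.mem_of_mem_erase hx
    have hxfu : x ≠ f u := (Finset.mem_erase.1 hx).1
    have hxS : x ∉ S := (Finset.mem_sdiff.1 hxTS).2
    have hxe : x ∉ S.erase u := fun h' => hxS (Finset.mem_of_mem_erase h')
    have husd : u ∈ S \ T := Finset.mem_sdiff.2 ⟨hu, huT⟩
    have hfxsd : f x ∈ S \ T := hfTS x hxTS
    have hfxu : f x ≠ u := fun h' => hxfu (by rw [← h', hff])
    have hm2 : 2 ≤ m := Finset.one_lt_card.2 ⟨u, husd, f x, hfxsd, fun h' => hfxu h'.symm⟩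
    have hsub : insert x (S.erase u) \ insert (h u x) (T.erase (f u))
        ⊆ ((S \ T).erase u).erase (f x) :=
      (Finset.subset_erase).2 ⟨(Finset.subset_erase).2
        ⟨M1 u hu x hxe, M2 u hu huT x hxe⟩, M3 u hu x hxTS hxfu⟩
    have hb := distle _ _ _ hsub
    rw [Finset.card_erase_of_mem (Finset.mem_erase.2 ⟨hfxu, hfxsd⟩),
      Finset.card_erase_of_mem husd] at hb
    have hcast : ((m - 1 - 1 : ℕ) : ℝ) = (m:ℝ) - 2 := by
      have h12 : m - 1 - 1 = m - 2 := by omega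
      rw [h12, Nat.cast_sub hm2]; norm_num
    rw [hcast] at hb
    exact hb
  -- counting facts
  have hTSsub : ∀ u : α, T \ S ⊆ (S.erase u)ᶜ := fun u x hx =>
    Finset.mem_compl.2 (fun h' => (Finset.mem_sdiff.1 hx).2 (Finset.mem_of_mem_erase h'))
  have hTScast : (((T \ S).card : ℝ)) = (m:ℝ) := by
    rw [← hST, ← hm]
  have hcomplcard : ∀ u ∈ S, (((S.erase u)ᶜ).card : ℝ) = (n:ℝ) - k + 1 := by
    intro u hu
    rw [Finset.card_compl, Finset.card_erase_of_mem hu, hS, hn]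
    have h1 : n - (k - 1) = n - k + 1 := by omega
    rw [h1, Nat.cast_add, Nat.cast_sub hkn.le, Nat.cast_one]
  -- per-u bounds
  have inner1 : ∀ u ∈ S, u ∈ T →
      (∑ x ∈ (S.erase u)ᶜ, dist (insert x (S.erase u)) (insert (h u x) (T.erase (f u))))
        ≤ (m:ℝ) * ((n:ℝ) - k) := by
    intro u hu huT
    rw [← Finset.sum_sdiff (hTSsub u)]
    have b1 : (∑ x ∈ (S.erase u)ᶜ \ (T \ S),
        dist (insert x (S.erase u)) (insert (h u x) (T.erase (f u))))
        ≤ (((S.erase u)ᶜ \ (T \ S)).card : ℝ) * (m:ℝ) := by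
      rw [← nsmul_eq_mul]
      refine Finset.sum_le_card_nsmul _ _ _ fun x hx => ?_
      exact hD1 u hu x (Finset.mem_compl.1 (Finset.mem_sdiff.1 hx).1)
    have b2 : (∑ x ∈ T \ S,
        dist (insert x (S.erase u)) (insert (h u x) (T.erase (f u))))
        ≤ ((T \ S).card : ℝ) * ((m:ℝ) - 1) := by
      rw [← nsmul_eq_mul]
      refine Finset.sum_le_card_nsmul _ _ _ fun x hx => ?_
      exact hD3 u hu huT x hx
    have c1 : (((S.erase u)ᶜ \ (T \ S)).card : ℝ) = ((n:ℝ) - k + 1) - m := by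
      rw [Finset.card_sdiff_of_subset (hTSsub u), Nat.cast_sub (Finset.card_le_card (hTSsub u)),
        hcomplcard u hu, hTScast]
    refine le_trans (add_le_add b1 b2) (le_of_eq ?_)
    rw [c1, hTScast]
    ring
  have inner2 : ∀ u ∈ S, u ∉ T →
      (∑ x ∈ (S.erase u)ᶜ, dist (insert x (S.erase u)) (insert (h u x) (T.erase (f u))))
        ≤ ((m:ℝ) - 1) * ((n:ℝ) - k) := by
    intro u hu huT
    have husd : u ∈ S \ T := Finset.mem_sdiff.2 ⟨hu, huT⟩
    have hm1 : 1 ≤ m := Finset.card_pos.2 ⟨u, husd⟩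
    have hfuTS : f u ∈ T \ S := hfST u husd
    have hPsub : (T \ S).erase (f u) ⊆ (S.erase u)ᶜ := fun x hx =>
      hTSsub u (Finset.mem_of_mem_erase hx)
    rw [← Finset.sum_sdiff hPsub]
    have b1 : (∑ x ∈ (S.erase u)ᶜ \ ((T \ S).erase (f u)),
        dist (insert x (S.erase u)) (insert (h u x) (T.erase (f u))))
        ≤ (((S.erase u)ᶜ \ ((T \ S).erase (f u))).card : ℝ) * ((m:ℝ) - 1) := by
      rw [← nsmul_eq_mul]
      refine Finset.sum_le_card_nsmul _ _ _ fun x hx => ?_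
      exact hD2 u hu huT x (Finset.mem_compl.1 (Finset.mem_sdiff.1 hx).1)
    have b2 : (∑ x ∈ (T \ S).erase (f u),
        dist (insert x (S.erase u)) (insert (h u x) (T.erase (f u))))
        ≤ (((T \ S).erase (f u)).card : ℝ) * ((m:ℝ) - 2) := by
      rw [← nsmul_eq_mul]
      refine Finset.sum_le_card_nsmul _ _ _ fun x hx => ?_
      exact hD4 u hu huT x hx
    have cP : ((((T \ S).erase (f u)).card : ℝ)) = (m:ℝ) - 1 := by
      have h1 : 1 ≤ (T \ S).card := Finset.card_pos.2 ⟨f u, hfuTS⟩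
      rw [Finset.card_erase_of_mem hfuTS, Nat.cast_sub h1, Nat.cast_one, hTScast]
    have c1 : (((S.erase u)ᶜ \ ((T \ S).erase (f u))).card : ℝ)
        = ((n:ℝ) - k + 1) - ((m:ℝ) - 1) := by
      rw [Finset.card_sdiff_of_subset hPsub, Nat.cast_sub (Finset.card_le_card hPsub),
        hcomplcard u hu, cP]
    refine le_trans (add_le_add b1 b2) (le_of_eq ?_)
    rw [c1, cP]
    ring
  -- total bound
  have hmk : (m:ℝ) ≤ (k:ℝ) := by
    rw [hm, ← hS]
    exact Nat.cast_le.2 (Finset.card_le_card Finset.sdiff_subset)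
  have outer : (∑ u ∈ S, ∑ x ∈ (S.erase u)ᶜ,
      dist (insert x (S.erase u)) (insert (h u x) (T.erase (f u))))
      ≤ (m:ℝ) * ((k:ℝ) - 1) * ((n:ℝ) - k) := by
    rw [← Finset.sum_sdiff (Finset.sdiff_subset : S \ T ⊆ S)]
    have b1 : (∑ u ∈ S \ (S \ T), ∑ x ∈ (S.erase u)ᶜ,
        dist (insert x (S.erase u)) (insert (h u x) (T.erase (f u))))
        ≤ ((S \ (S \ T)).card : ℝ) * ((m:ℝ) * ((n:ℝ) - k)) := by
      rw [← nsmul_eq_mul]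
      refine Finset.sum_le_card_nsmul _ _ _ fun u hu => ?_
      have huS : u ∈ S := (Finset.mem_sdiff.1 hu).1
      have huT : u ∈ T := by
        have := (Finset.mem_sdiff.1 hu).2
        by_contra huT
        exact this (Finset.mem_sdiff.2 ⟨huS, huT⟩)
      exact inner1 u huS huT
    have b2 : (∑ u ∈ S \ T, ∑ x ∈ (S.erase u)ᶜ,
        dist (insert x (S.erase u)) (insert (h u x) (T.erase (f u))))
        ≤ ((S \ T).card : ℝ) * (((m:ℝ) - 1) * ((n:ℝ) - k)) := by
      rw [← nsmul_eq_mul]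
      refine Finset.sum_le_card_nsmul _ _ _ fun u hu => ?_
      exact inner2 u (Finset.mem_sdiff.1 hu).1 (Finset.mem_sdiff.1 hu).2
    have c1 : ((S \ (S \ T)).card : ℝ) = (k:ℝ) - m := by
      rw [Finset.card_sdiff_of_subset (Finset.sdiff_subset : S \ T ⊆ S),
        Nat.cast_sub (Finset.card_le_card (Finset.sdiff_subset : S \ T ⊆ S)), hS, ← hm]
    have c2 : (((S \ T).card : ℝ)) = (m:ℝ) := by rw [← hm]
    refine le_trans (add_le_add b1 b2) (le_of_eq ?_)
    rw [c1, c2]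
    ring
  -- assemble
  have hWle := W_le_pairing (M.step S) (M.step T) w hwnn
    (fun p => insert p.2 (S.erase p.1)) (fun p => insert (h p.1 p.2) (T.erase (f p.1))) hF hG
  rw [hsum_w (fun u x => dist (insert x (S.erase u)) (insert (h u x) (T.erase (f u))))] at hWle
  refine le_trans hWle ?_
  have hpull : (∑ u ∈ S, ∑ x ∈ (S.erase u)ᶜ,
      c * dist (insert x (S.erase u)) (insert (h u x) (T.erase (f u))))
      = c * ∑ u ∈ S, ∑ x ∈ (S.erase u)ᶜ,
          dist (insert x (S.erase u)) (insert (h u x) (T.erase (f u))) := by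
    rw [Finset.mul_sum]
    exact Finset.sum_congr rfl fun u _ => (Finset.mul_sum _ _ _).symm
  rw [hpull]
  refine le_trans (mul_le_mul_of_nonneg_left outer hcnn) (le_of_eq ?_)
  have hdist : dist S T = (m:ℝ) := by rw [hm]; rfl
  rw [hdist, hcdef, hNcast]
  have hk0 : (k:ℝ) ≠ 0 := Nat.cast_ne_zero.2 hk.ne'
  have hnk0 : (n:ℝ) - k + 1 ≠ 0 := by
    have hlt : (k:ℝ) < n := Nat.cast_lt.2 hkn
    linarith
  field_simp


end FinMatroid

/-- The basis exchange walk on the uniform matroid `U(k,n)` (whose bases are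
all `k`-element subsets of an `n`-element ground set, `0 < k < n`) has
curvature at least `1 - (k-1)(n-k)/(k(n-k+1))`, which is positive. -/
theorem stmt7 {α : Type*} [Fintype α] [DecidableEq α] (M : FinMatroid α)
    (k n : ℕ) (hk : 0 < k) (hkn : k < n) (hn : Fintype.card α = n)
    (huniform : ∀ B, M.IsBase B ↔ B.card = k) :
    M.curvature ≥ 1 - ((k : ℝ) - 1) * ((n : ℝ) - (k : ℝ)) / ((k : ℝ) * ((n : ℝ) - (k : ℝ) + 1))
      ∧ 0 < M.curvature := by
  set κ₀ : ℝ := 1 - ((k : ℝ) - 1) * ((n : ℝ) - (k : ℝ)) / ((k : ℝ) * ((n : ℝ) - (k : ℝ) + 1))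
    with hκ
  have hmem : κ₀ ∈ {κ : ℝ | ∀ S T, M.IsBase S → M.IsBase T →
      FinMatroid.W (M.step S) (M.step T) ≤ (1 - κ) * FinMatroid.dist S T} := by
    intro S T hS hT
    have h1 : (1 : ℝ) - κ₀ = ((k:ℝ) - 1) * ((n:ℝ) - k) / ((k:ℝ) * ((n:ℝ) - k + 1)) := by
      rw [hκ]; ring
    rw [h1]
    exact FinMatroid.key M k n hk hkn hn huniform S T ((huniform S).1 hS) ((huniform T).1 hT)
  have hbdd : BddAbove {κ : ℝ | ∀ S T, M.IsBase S → M.IsBase T →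
      FinMatroid.W (M.step S) (M.step T) ≤ (1 - κ) * FinMatroid.dist S T} := by
    obtain ⟨S, -, hScard⟩ := Finset.exists_subset_card_eq
      (show k ≤ (Finset.univ : Finset α).card by rw [Finset.card_univ, hn]; exact hkn.le)
    have hSne : S.Nonempty := Finset.card_pos.1 (by omega)
    obtain ⟨x, hx⟩ := hSne
    have hSc : Sᶜ.Nonempty := by
      rw [← Finset.card_pos, Finset.card_compl, hScard, hn]; omega
    obtain ⟨y, hy⟩ := hSc
    have hyS : y ∉ S := Finset.mem_compl.1 hy
    set T := insert y (S.erase x) with hTdef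
    have hTcard : T.card = k := by
      rw [hTdef, Finset.card_insert_of_notMem (fun h' => hyS (Finset.mem_of_mem_erase h')),
        Finset.card_erase_of_mem hx, hScard]
      omega
    have hxT : x ∉ T := by
      rw [hTdef]
      intro h'
      rcases Finset.mem_insert.1 h' with h'' | h''
      · exact hyS (h'' ▸ hx)
      · exact (Finset.mem_erase.1 h'').1 rfl
    have hd : (0:ℝ) < FinMatroid.dist S T := by
      have hpos : 0 < (S \ T).card := Finset.card_pos.2 ⟨x, Finset.mem_sdiff.2 ⟨hx, hxT⟩⟩
      show (0:ℝ) < (((S \ T).card : ℕ) : ℝ)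
      exact_mod_cast hpos
    refine ⟨1, fun κ hκmem => ?_⟩
    have h1 := hκmem S T ((huniform S).2 hScard) ((huniform T).2 hTcard)
    have h0 := FinMatroid.W_nonneg' (M.step S) (M.step T)
    nlinarith
  have hge : κ₀ ≤ M.curvature := le_csSup hbdd hmem
  have hκpos : 0 < κ₀ := by
    rw [hκ]
    have hk1 : (1:ℝ) ≤ (k:ℝ) := by exact_mod_cast hk
    have hlt : (k:ℝ) < (n:ℝ) := Nat.cast_lt.2 hkn
    have hden : 0 < (k:ℝ) * ((n:ℝ) - k + 1) := by nlinarith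
    have hnum : ((k:ℝ) - 1) * ((n:ℝ) - k) < (k:ℝ) * ((n:ℝ) - k + 1) := by nlinarith
    have hfrac : ((k:ℝ) - 1) * ((n:ℝ) - k) / ((k:ℝ) * ((n:ℝ) - k + 1)) < 1 :=
      (div_lt_one hden).2 hnum
    linarith
  exact ⟨hge, lt_of_lt_of_le hκpos hge⟩
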